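/- arXiv:2305.09133 — 2 statements merged into one kernel-verified Lean document; each statement's English description precedes it below -/
import Mathlib

section
/- Let (G,μ) be an ε-coherent massed graph that is not (δ,r+1)-focused, and suppose εr·δ = ε and ε ≤ δ/2. Then there exists Z ⊆ V(G) with μ(Z) ≥ δ such that the massed graph (G[Z], μ') with μ'(X)=μ(X)/μ(Z) is (εr, r)-coherent. -/
open SimpleGraph

/-- Sets `A`, `B` are complete to each other: disjoint with all edges between them. -/
def Complete {V : Type} (G : SimpleGraph V) (A B : Set V) : Prop :=
  Disjoint A B ∧ ∀ a ∈ A, ∀ b ∈ B, G.Adj a b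

/-- Sets `A`, `B` are anticomplete: disjoint with no edges between them. -/
def Anticomplete {V : Type} (G : SimpleGraph V) (A B : Set V) : Prop :=
  Disjoint A B ∧ ∀ a ∈ A, ∀ b ∈ B, ¬ G.Adj a b

/-- `V1 = N(u) \ N[v]`. -/
def sideA {V : Type} (G : SimpleGraph V) (u v : V) : Set V :=
  G.neighborSet u \ insert v (G.neighborSet v)

/-- `V2 = N(v) \ N[u]`. -/
def sideB {V : Type} (G : SimpleGraph V) (u v : V) : Set V :=
  G.neighborSet v \ insert u (G.neighborSet u)

/-- `V3 = N(u) ∩ N(v)`. -/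
def sideC {V : Type} (G : SimpleGraph V) (u v : V) : Set V :=
  G.neighborSet u ∩ G.neighborSet v

/-- The pair `{a, b}` crosses one of the three pairs of sets `(V1,V2)`, `(V2,V3)`, `(V1,V3)`. -/
def pivotCross {V : Type} (G : SimpleGraph V) (u v a b : V) : Prop :=
  (a ∈ sideA G u v ∧ b ∈ sideB G u v) ∨ (a ∈ sideB G u v ∧ b ∈ sideA G u v) ∨
  (a ∈ sideB G u v ∧ b ∈ sideC G u v) ∨ (a ∈ sideC G u v ∧ b ∈ sideB G u v) ∨
  (a ∈ sideA G u v ∧ b ∈ sideC G u v) ∨ (a ∈ sideC G u v ∧ b ∈ sideA G u v)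

lemma pivotCross_comm {V : Type} {G : SimpleGraph V} {u v a b : V} :
    pivotCross G u v a b ↔ pivotCross G u v b a := by
  unfold pivotCross; tauto

/-- The pivot `G ∧ uv`: complement the edges between each of the pairs `(V1,V2)`, `(V2,V3)`,
`(V1,V3)` and then swap the labels of `u` and `v`. -/
def pivotGraph {V : Type} (G : SimpleGraph V) (u v : V) : SimpleGraph V :=
  letI := Classical.decEq V
  { Adj := fun x y => x ≠ y ∧
      Xor' (G.Adj (Equiv.swap u v x) (Equiv.swap u v y))
        (pivotCross G u v (Equiv.swap u v x) (Equiv.swap u v y)),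
    symm := ⟨by
      rintro x y ⟨hxy, h⟩
      refine ⟨hxy.symm, ?_⟩
      have h1 : G.Adj (Equiv.swap u v x) (Equiv.swap u v y) ↔
          G.Adj (Equiv.swap u v y) (Equiv.swap u v x) := G.adj_comm _ _
      have h2 : pivotCross G u v (Equiv.swap u v x) (Equiv.swap u v y) ↔
          pivotCross G u v (Equiv.swap u v y) (Equiv.swap u v x) := pivotCross_comm
      unfold Xor' at h ⊢
      rw [h1, h2] at h
      exact h⟩,
    loopless := ⟨fun _ h => h.1 rfl⟩ }

/-- `H` is a pivot-minor of `G`: `H` is obtainable from `G` (up to isomorphism) by a sequence of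
vertex deletions and pivots of edges. -/
inductive IsPivotMinor : ∀ {W U : Type}, SimpleGraph W → SimpleGraph U → Prop
  | of_iso {W U : Type} {H : SimpleGraph W} {G : SimpleGraph U} :
      Nonempty (H ≃g G) → IsPivotMinor H G
  | pivot {W U : Type} {H : SimpleGraph W} {G : SimpleGraph U} (u v : U) :
      G.Adj u v → IsPivotMinor H (pivotGraph G u v) → IsPivotMinor H G
  | delete {W U : Type} {H : SimpleGraph W} {G : SimpleGraph U} (s : Set U) :
      IsPivotMinor H (G.induce s) → IsPivotMinor H G

/-- `G` is obtained from `H` by replacing each edge `uv` of `H` with a path whose length satisfies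
`P u v h`: there are internally disjoint induced paths of `G` joining the images of the branch
vertices, covering all of `G`, whose edges are exactly the edges of `G`. -/
def IsEdgeReplacement {U W : Type} (H : SimpleGraph U)
    (P : ∀ u v : U, H.Adj u v → ℕ → Prop) (G : SimpleGraph W) : Prop :=
  ∃ (x : U ↪ W) (p : ∀ u v : U, H.Adj u v → G.Walk (x u) (x v)),
    (∀ u v h, (p u v h).IsPath) ∧
    (∀ u v h, P u v h (p u v h).length) ∧
    (∀ u v h, p v u h.symm = (p u v h).reverse) ∧
    (∀ u v h w, w ∈ (p u v h).support → w ∈ Set.range x → w = x u ∨ w = x v) ∧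
    (∀ u v h k l h', s(u, v) ≠ s(k, l) →
      ∀ w, w ∈ (p u v h).support → w ∈ (p k l h').support → w ∈ Set.range x) ∧
    (∀ w : W, w ∈ Set.range x ∨ ∃ u v h, w ∈ (p u v h).support) ∧
    (∀ a b : W, G.Adj a b ↔ ∃ u v h, (p u v h).toSubgraph.Adj a b)

/-- `G` is obtained from `H` by replacing each edge with a path whose length satisfies `P`. -/
def IsSubdivisionWith {U W : Type} (H : SimpleGraph U) (P : ℕ → Prop) (G : SimpleGraph W) : Prop :=
  IsEdgeReplacement H (fun _ _ _ n => P n) G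

/-- An `F`-filleting of `G`: subdivide (at least once) every edge of `G` not in `F`, and do not
subdivide the edges of `F`. -/
def IsFilleting {U W : Type} (G F : SimpleGraph U) (H : SimpleGraph W) : Prop :=
  IsEdgeReplacement G (fun u v _ n => (F.Adj u v ∧ n = 1) ∨ (¬ F.Adj u v ∧ 2 ≤ n)) H

/-- Join of `H` with a single new vertex (`H + K_1`), the new vertex being `none`. -/
def addApex {W : Type} (H : SimpleGraph W) : SimpleGraph (Option W) :=
  SimpleGraph.fromRel fun a b =>
    a = none ∨ ∃ u v : W, a = some u ∧ b = some v ∧ H.Adj u v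

/-- `F` with ends `a`, `b` is a fuzzy odd path (with length satisfying `P`): it consists of an odd
path from `a` to `b` through all the vertices, possibly together with one extra edge `xy` between
two internal vertices such that `xy` lies in a triangle. -/
def IsFuzzyOddPath {T : Type} (F : SimpleGraph T) (a b : T) (P : ℕ → Prop) : Prop :=
  ∃ p : F.Walk a b, p.IsPath ∧ Odd p.length ∧ P p.length ∧ (∀ t : T, t ∈ p.support) ∧
    ((∀ c d : T, F.Adj c d ↔ p.toSubgraph.Adj c d) ∨
      ∃ x y : T, x ∈ p.support ∧ y ∈ p.support ∧ x ≠ a ∧ x ≠ b ∧ y ≠ a ∧ y ≠ b ∧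
        F.Adj x y ∧ ¬ p.toSubgraph.Adj x y ∧ (∃ z : T, F.Adj x z ∧ F.Adj y z) ∧
        (∀ c d : T, F.Adj c d ↔ (p.toSubgraph.Adj c d ∨ (c = x ∧ d = y) ∨ (c = y ∧ d = x))))

/-- `G` is a proper fuzzy odd subdivision of `H`: `G` is obtained from `H` by replacing each edge
with a fuzzy odd path of (odd) length at least `3`. -/
def IsProperFuzzyOddSubdivision {U W : Type} (H : SimpleGraph U) (G : SimpleGraph W) : Prop :=
  ∃ (x : U ↪ W) (S : ∀ u v : U, H.Adj u v → Set W)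
    (hS : ∀ u v h, x u ∈ S u v h ∧ x v ∈ S u v h),
    (∀ u v h, S v u h.symm = S u v h) ∧
    (∀ u v h w, w ∈ S u v h → w ∈ Set.range x → w = x u ∨ w = x v) ∧
    (∀ u v h k l h', s(u, v) ≠ s(k, l) → ∀ w, w ∈ S u v h → w ∈ S k l h' → w ∈ Set.range x) ∧
    (∀ w : W, w ∈ Set.range x ∨ ∃ u v h, w ∈ S u v h) ∧
    (∀ a b : W, G.Adj a b → ∃ u v h, a ∈ S u v h ∧ b ∈ S u v h) ∧
    (∀ u v h, IsFuzzyOddPath (G.induce (S u v h))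
      ⟨x u, (hS u v h).1⟩ ⟨x v, (hS u v h).2⟩ (fun n => 3 ≤ n))

/-- A mass on a graph `G`. -/
structure IsMass {V : Type} (G : SimpleGraph V) (μ : Set V → ℝ) : Prop where
  map_empty : μ ∅ = 0
  map_univ : μ Set.univ = 1
  mono : ∀ ⦃X Y : Set V⦄, X ⊆ Y → μ X ≤ μ Y
  subadditive : ∀ X Y : Set V, μ (X ∪ Y) ≤ μ X + μ Y

/-- `N^r[v]`: the ball of radius `r` about `v`. -/
def ball {V : Type} (G : SimpleGraph V) (v : V) (r : ℕ) : Set V :=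
  {w | ∃ p : G.Walk v w, p.length ≤ r}

/-- `(G, μ)` is `ε`-coherent. -/
def EpsCoherent {V : Type} (G : SimpleGraph V) (μ : Set V → ℝ) (ε : ℝ) : Prop :=
  (∀ v : V, μ {v} < ε) ∧ (∀ v : V, μ (G.neighborSet v) < ε) ∧
  ∀ A B : Set V, Anticomplete G A B → min (μ A) (μ B) < ε

/-- `(G, μ)` is `(ε, r)`-coherent. -/
def EpsRCoherent {V : Type} (G : SimpleGraph V) (μ : Set V → ℝ) (ε : ℝ) (r : ℕ) : Prop :=
  (∀ v : V, μ (_root_.ball G v r) < ε) ∧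
  ∀ A B : Set V, Anticomplete G A B → min (μ A) (μ B) < ε

/-- `(G, μ)` is `(δ, r)`-focused. -/
def Focused {V : Type} (G : SimpleGraph V) (μ : Set V → ℝ) (δ : ℝ) (r : ℕ) : Prop :=
  ∀ Z : Set V, δ ≤ μ Z → ∃ v : Z, μ Z / 2 ≤ μ (Subtype.val '' _root_.ball (G.induce Z) v r)

/-- `N[X]`. -/
def closedNbhd {V : Type} (G : SimpleGraph V) (X : Set V) : Set V :=
  X ∪ {w | ∃ a ∈ X, G.Adj a w}

/-- `x` is an `r`-centre of `X`: every vertex of `X` is within distance `r` of `x` in `G[X]`. -/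
def IsCentre {V : Type} (G : SimpleGraph V) (X : Set V) (x : V) (hx : x ∈ X) (r : ℕ) : Prop :=
  ∀ y : X, ∃ p : (G.induce X).Walk ⟨x, hx⟩ y, p.length ≤ r

/-- A leaf: a vertex of degree at most 1. -/
def IsLeaf {V : Type} (G : SimpleGraph V) (v : V) : Prop := (G.neighborSet v).Subsingleton

/-- `P` is a path graph. -/
def IsPathGraph {U : Type} (P : SimpleGraph U) : Prop :=
  ∃ (a b : U) (w : P.Walk a b), w.IsPath ∧ (∀ u : U, u ∈ w.support) ∧
    ∀ x y : U, P.Adj x y ↔ w.toSubgraph.Adj x y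

/-- A caterpillar: a tree `T` such that `T − L(T)` is a path. -/
def IsCaterpillar {U : Type} (T : SimpleGraph U) : Prop :=
  T.IsTree ∧ IsPathGraph (T.induce {v | ¬ IsLeaf T v})

/-- Disjoint union of `q` stars, each with `p` leaves: `(i, none)` is the centre of the `i`-th
star and `(i, some j)` its leaves. -/
def starForest (q p : ℕ) : SimpleGraph (Fin q × Option (Fin p)) :=
  SimpleGraph.fromRel fun a b => a.1 = b.1 ∧ a.2 = none ∧ b.2 ≠ none

/-- The clique number `ω(G)`. -/
noncomputable def cliqueNumber {V : Type} [Fintype V] (G : SimpleGraph V) : ℕ :=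
  sSup {n | ∃ s : Finset V, G.IsNClique n s}

/-- The independence number `α(G)`. -/
noncomputable def indepNumber {V : Type} [Fintype V] (G : SimpleGraph V) : ℕ :=
  cliqueNumber Gᶜ

lemma ball_subset_ball_succ {V : Type} (G : SimpleGraph V) (v : V) (r : ℕ) :
    _root_.ball G v r ⊆ _root_.ball G v (r + 1) :=
  fun _ ⟨p, hp⟩ => ⟨p, hp.trans r.le_succ⟩

lemma anticomplete_ball_compl_ball_succ {V : Type} (G : SimpleGraph V) (v : V) (r : ℕ) :
    Anticomplete G (_root_.ball G v r) (_root_.ball G v (r + 1))ᶜ := by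
  refine ⟨Set.disjoint_compl_right_iff_subset.mpr (ball_subset_ball_succ G v r), ?_⟩
  rintro a ⟨p, hp⟩ b hb hab
  exact hb ⟨p.concat hab, by rw [Walk.length_concat]; omega⟩

lemma Anticomplete.image_val {V : Type} {G : SimpleGraph V} {Z : Set V} {A B : Set Z}
    (h : Anticomplete (G.induce Z) A B) :
    Anticomplete G (Subtype.val '' A) (Subtype.val '' B) := by
  refine ⟨(Set.disjoint_image_iff Subtype.val_injective).mpr h.1, ?_⟩
  rintro _ ⟨a, ha, rfl⟩ _ ⟨b, hb, rfl⟩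
  exact h.2 a ha b hb

lemma EpsCoherent.min_mass_image_val_lt {V : Type} {G : SimpleGraph V} {μ : Set V → ℝ} {ε : ℝ}
    (h : EpsCoherent G μ ε) {Z : Set V} {A B : Set Z} (hAB : Anticomplete (G.induce Z) A B) :
    min (μ (Subtype.val '' A)) (μ (Subtype.val '' B)) < ε :=
  h.2.2 _ _ hAB.image_val

/-- The ball of radius `r` is anticomplete to the complement of the ball of radius `r + 1`, which
carries more than half of the mass. -/
lemma mass_ball_lt_of_mass_ball_succ_lt_half {W : Type} {H : SimpleGraph W} {ν : Set W → ℝ}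
    {ε : ℝ} (hsub : ∀ X Y : Set W, ν (X ∪ Y) ≤ ν X + ν Y)
    (hanti : ∀ A B : Set W, Anticomplete H A B → min (ν A) (ν B) < ε) {v : W} {r : ℕ}
    (hball : ν (_root_.ball H v (r + 1)) < ν Set.univ / 2) (hε : ε ≤ ν Set.univ / 2) :
    ν (_root_.ball H v r) < ε := by
  set B := _root_.ball H v (r + 1)
  have hcompl : ε < ν Bᶜ := by
    have := hsub B Bᶜ
    rw [Set.union_compl_self] at this
    linarith
  exact (min_lt_iff.mp (hanti _ _ (anticomplete_ball_compl_ball_succ H v r))).resolve_right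
    hcompl.le.not_gt

lemma EpsRCoherent.div {W : Type} {H : SimpleGraph W} {ν : Set W → ℝ} {ε εr c : ℝ} {r : ℕ}
    (h : EpsRCoherent H ν ε r) (hc : 0 < c) (hε : ε ≤ εr * c) :
    EpsRCoherent H (fun X => ν X / c) εr r := by
  have key : ∀ {x : ℝ}, x < ε → x / c < εr := fun hx => (div_lt_iff₀ hc).mpr (hx.trans_le hε)
  refine ⟨fun v => key (h.1 v), fun A B hAB => ?_⟩
  rw [min_div_div_right hc.le]
  exact key (h.2 A B hAB)

/-- an `ε`-coherent massed graph that is not `(δ, r+1)`-focused (with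
`εr·δ = ε ≤ δ/2`) has a set `Z` of mass at least `δ` whose normalized induced massed graph is
`(εr, r)`-coherent. -/
theorem unfocused_gives_rcoherent {V : Type} (G : SimpleGraph V) (μ : Set V → ℝ)
    (ε εr δ : ℝ) (r : ℕ) (hμ : IsMass G μ) (hco : EpsCoherent G μ ε)
    (hnf : ¬ Focused G μ δ (r + 1))
    (heq : εr * δ = ε) (hle : ε ≤ δ / 2) (hδ : 0 < δ) (hεr : 0 < εr) :
    ∃ Z : Set V, δ ≤ μ Z ∧
      EpsRCoherent (G.induce Z) (fun X : Set Z => μ (Subtype.val '' X) / μ Z) εr r := by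
  obtain ⟨Z, hZ, hball⟩ : ∃ Z : Set V, δ ≤ μ Z ∧
      ∀ v : Z, μ (Subtype.val '' _root_.ball (G.induce Z) v (r + 1)) < μ Z / 2 := by
    simpa [Focused] using hnf
  have hμZ : μ (Subtype.val '' (Set.univ : Set Z)) = μ Z := by
    rw [Set.image_univ, Subtype.range_coe]
  have hε : ε ≤ εr * μ Z := heq ▸ mul_le_mul_of_nonneg_left hZ hεr.le
  have hsub (X Y : Set Z) :
      μ (Subtype.val '' (X ∪ Y)) ≤ μ (Subtype.val '' X) + μ (Subtype.val '' Y) := by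
    rw [Set.image_union]
    exact hμ.subadditive _ _
  refine ⟨Z, hZ, EpsRCoherent.div ⟨fun v => ?_, fun _ _ => hco.min_mass_image_val_lt⟩
    (hδ.trans_le hZ) hε⟩
  refine mass_ball_lt_of_mass_ball_succ_lt_half hsub (fun _ _ => hco.min_mass_image_val_lt) ?_ ?_
  · simpa only [hμZ] using hball v
  · rw [hμZ]
    linarith
end

section
/- Let H be a graph obtained from K_r by replacing each edge with a path of length at least 4 congruent to 1 mod 3, let x1x2x3x4x5 be an induced path in H with x2,x3,x4 of degree 2 in H, and let H' = (H \ {x2,x3,x4}) ∪ {x1x5}. Let u be the apex vertex of \overline{H}+K_1. Then ((\overline{H} + K_1) ∧ ux3 ∧ x2x4) \ {x2,x3,x4} = \overline{H'} + K_1. -/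
open SimpleGraph

/-! Since the apex `u` sees every vertex, pivoting `ux3` complements exactly the pairs split by
`N(x3)`. Outside `{x2, x3, x4}` everything is a neighbour of `x3` in the complement, so that part
is untouched, `x3` becomes the new apex, and the edges from `x2` and `x4` are complemented: among
the surviving vertices `x2` now sees only `x1` and `x4` only `x5`. The pivot `x2x4` therefore
toggles only the pair `x1x5`: it leaves the complement, that is, it is added to `H`. -/

namespace SimpleGraph

variable {V : Type}

section Pivot

variable {G : SimpleGraph V} {u v a b : V}

lemma mem_sideA_iff (hav : a ≠ v) : a ∈ sideA G u v ↔ G.Adj u a ∧ ¬ G.Adj v a := by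
  simp [sideA, hav]

lemma mem_sideB_iff (hau : a ≠ u) : a ∈ sideB G u v ↔ G.Adj v a ∧ ¬ G.Adj u a := by
  simp [sideB, hau]

lemma mem_sideC_iff : a ∈ sideC G u v ↔ G.Adj u a ∧ G.Adj v a := Iff.rfl

lemma pivotCross_iff (hau : a ≠ u) (hav : a ≠ v) (hbu : b ≠ u) (hbv : b ≠ v) :
    pivotCross G u v a b ↔ (G.Adj u a ∨ G.Adj v a) ∧ (G.Adj u b ∨ G.Adj v b) ∧
      ¬ ((G.Adj u a ↔ G.Adj u b) ∧ (G.Adj v a ↔ G.Adj v b)) := by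
  simp only [pivotCross, mem_sideA_iff hav, mem_sideA_iff hbv, mem_sideB_iff hau,
    mem_sideB_iff hbu, mem_sideC_iff]
  tauto

lemma not_pivotCross_right : ¬ pivotCross G u v v b := by
  simp [pivotCross, sideA, sideB, sideC]

lemma pivotGraph_adj [DecidableEq V] {x y : V} :
    (pivotGraph G u v).Adj x y ↔ x ≠ y ∧ Xor (G.Adj (Equiv.swap u v x) (Equiv.swap u v y))
      (pivotCross G u v (Equiv.swap u v x) (Equiv.swap u v y)) := by
  simp only [pivotGraph]
  congr!

lemma pivotGraph_adj_of_ne (hau : a ≠ u) (hav : a ≠ v) (hbu : b ≠ u) (hbv : b ≠ v) :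
    (pivotGraph G u v).Adj a b ↔ Xor (G.Adj a b) (pivotCross G u v a b) := by
  classical
  rw [pivotGraph_adj, Equiv.swap_apply_of_ne_of_ne hau hav,
    Equiv.swap_apply_of_ne_of_ne hbu hbv, and_iff_right_iff_imp]
  rintro h rfl
  simp [pivotCross_iff hau hav hau hav] at h

lemma pivotGraph_adj_left (hbu : b ≠ u) (hbv : b ≠ v) :
    (pivotGraph G u v).Adj u b ↔ G.Adj v b := by
  classical
  simp [pivotGraph_adj, Equiv.swap_apply_of_ne_of_ne hbu hbv, not_pivotCross_right,
    xor_def, hbu.symm]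

lemma pivotGraph_adj_of_adj_left (hua : G.Adj u a) (hub : G.Adj u b) (hav : a ≠ v)
    (hbv : b ≠ v) :
    (pivotGraph G u v).Adj a b ↔ Xor (G.Adj a b) (¬ (G.Adj v a ↔ G.Adj v b)) := by
  rw [pivotGraph_adj_of_ne hua.ne' hav hub.ne' hbv, pivotCross_iff hua.ne' hav hub.ne' hbv]
  simp [hua, hub]

lemma pivotGraph_adj_of_not_adj (hua : ¬ G.Adj u a) (hva : ¬ G.Adj v a) (hau : a ≠ u)
    (hav : a ≠ v) (hbu : b ≠ u) (hbv : b ≠ v) :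
    (pivotGraph G u v).Adj a b ↔ G.Adj a b := by
  rw [pivotGraph_adj_of_ne hau hav hbu hbv, pivotCross_iff hau hav hbu hbv]
  simp [hua, hva, xor_def]

end Pivot

section Apex

variable {K : SimpleGraph V} {a b v : V}

lemma addApex_adj_none_some : (addApex K).Adj none (some b) := by
  simp [addApex]

lemma addApex_adj_some_some : (addApex K).Adj (some a) (some b) ↔ K.Adj a b := by
  simp only [addApex, fromRel_adj, ne_eq, reduceCtorEq, false_or, Option.some.injEq]
  constructor
  · rintro ⟨-, ⟨_, _, rfl, rfl, h⟩ | ⟨_, _, rfl, rfl, h⟩⟩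
    exacts [h, h.symm]
  · exact fun h => ⟨h.ne, .inl ⟨a, b, rfl, rfl, h⟩⟩

lemma pivotGraph_addApex_adj_none_some (hbv : b ≠ v) :
    (pivotGraph (addApex K) none (some v)).Adj none (some b) ↔ K.Adj v b := by
  rw [pivotGraph_adj_left (by simp) (by simpa), addApex_adj_some_some]

lemma pivotGraph_addApex_adj_some_some (hav : a ≠ v) (hbv : b ≠ v) :
    (pivotGraph (addApex K) none (some v)).Adj (some a) (some b) ↔
      Xor (K.Adj a b) (¬ (K.Adj v a ↔ K.Adj v b)) := by
  rw [pivotGraph_adj_of_adj_left addApex_adj_none_some addApex_adj_none_some (by simpa)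
    (by simpa), addApex_adj_some_some, addApex_adj_some_some, addApex_adj_some_some]

lemma pivotGraph_addApex_compl_adj_of_adj {H : SimpleGraph V} {y : V} (hvy : H.Adj v y)
    (hva : Hᶜ.Adj v a) (hay : a ≠ y) :
    (pivotGraph (addApex Hᶜ) none (some v)).Adj (some y) (some a) ↔ H.Adj y a := by
  have hvy' : ¬ Hᶜ.Adj v y := fun h => (compl_adj H v y).1 h |>.2 hvy
  rw [pivotGraph_addApex_adj_some_some hvy.ne' hva.ne']
  simp [hvy', hva, hay.symm]

lemma nonempty_induce_iso_addApex {G : SimpleGraph (Option V)} {S : Set (Option V)}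
    {p : V → Prop} (K : SimpleGraph (Subtype p)) (hnone : none ∈ S)
    (hsome : ∀ v, some v ∈ S ↔ p v) (hapex : ∀ a : Subtype p, G.Adj none (some a))
    (hadj : ∀ a b : Subtype p, G.Adj (some a) (some b) ↔ K.Adj a b) :
    Nonempty (G.induce S ≃g addApex K) := by
  let e : S ≃ Option (Subtype p) :=
    { toFun := fun
        | ⟨none, _⟩ => none
        | ⟨some a, h⟩ => some ⟨a, (hsome a).1 h⟩
      invFun := fun
        | none => ⟨none, hnone⟩
        | some a => ⟨some a, (hsome a).2 a.2⟩
      left_inv := fun | ⟨none, _⟩ => rfl | ⟨some _, _⟩ => rfl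
      right_inv := fun | none => rfl | some _ => rfl }
  refine ⟨⟨e, ?_⟩⟩
  rintro ⟨_ | a, ha⟩ ⟨_ | b, hb⟩
  · simp [e]
  · simpa [e, addApex_adj_none_some] using hapex ⟨b, (hsome b).1 hb⟩
  · simpa [e, adj_comm _ (some _) none, addApex_adj_none_some] using hapex ⟨a, (hsome a).1 ha⟩
  · simpa [e, addApex_adj_some_some] using (hadj ⟨a, (hsome a).1 ha⟩ ⟨b, (hsome b).1 hb⟩).symm

lemma not_pivotGraph_addApex_compl_adj_none_some {H : SimpleGraph V} (hvb : H.Adj v b) :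
    ¬ (pivotGraph (addApex Hᶜ) none (some v)).Adj none (some b) := by
  rw [pivotGraph_addApex_adj_none_some hvb.ne', compl_adj]
  exact fun h => h.2 hvb

end Apex

lemma adj_iff_of_neighborSet_eq_pair {H : SimpleGraph V} {x y z a : V}
    (h : H.neighborSet x = {y, z}) : H.Adj x a ↔ a = y ∨ a = z := by
  rw [← mem_neighborSet, h, Set.mem_insert_iff, Set.mem_singleton_iff]

end SimpleGraph

section InducedPath

variable {V : Type} {H : SimpleGraph V} {x1 x2 x3 x4 x5 : V}

lemma compl_adj_middle (h3 : H.neighborSet x3 = {x2, x4})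
    (a : {v : V // v ≠ x2 ∧ v ≠ x3 ∧ v ≠ x4}) : Hᶜ.Adj x3 a := by
  rw [compl_adj, adj_iff_of_neighborSet_eq_pair h3]
  exact ⟨a.2.2.1.symm, not_or.2 ⟨a.2.1, a.2.2.2⟩⟩

lemma pivot_middle_adj_none (h3 : H.neighborSet x3 = {x2, x4})
    (a : {v : V // v ≠ x2 ∧ v ≠ x3 ∧ v ≠ x4}) :
    (pivotGraph (addApex Hᶜ) none (some x3)).Adj none (some a) :=
  (pivotGraph_addApex_adj_none_some a.2.2.1).2 (compl_adj_middle h3 a)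

lemma pivot_middle_adj_some (h3 : H.neighborSet x3 = {x2, x4})
    (a b : {v : V // v ≠ x2 ∧ v ≠ x3 ∧ v ≠ x4}) :
    (pivotGraph (addApex Hᶜ) none (some x3)).Adj (some a) (some b) ↔ Hᶜ.Adj a b := by
  rw [pivotGraph_addApex_adj_some_some a.2.2.1 b.2.2.1]
  simp [compl_adj_middle h3 a, compl_adj_middle h3 b, xor_def]

lemma pivotCross_pivot_middle (hx15 : x1 ≠ x5) (h2 : H.neighborSet x2 = {x1, x3})
    (h3 : H.neighborSet x3 = {x2, x4}) (h4 : H.neighborSet x4 = {x3, x5})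
    (a b : {v : V // v ≠ x2 ∧ v ≠ x3 ∧ v ≠ x4}) :
    pivotCross (pivotGraph (addApex Hᶜ) none (some x3)) (some x2) (some x4) (some a) (some b) ↔
      s(a.1, b.1) = s(x1, x5) := by
  have h32 : H.Adj x3 x2 := (adj_iff_of_neighborSet_eq_pair h3).2 (.inl rfl)
  have h34 : H.Adj x3 x4 := (adj_iff_of_neighborSet_eq_pair h3).2 (.inr rfl)
  rw [pivotCross_iff (by simpa using a.2.1) (by simpa using a.2.2.2) (by simpa using b.2.1)
      (by simpa using b.2.2.2),
    pivotGraph_addApex_compl_adj_of_adj h32 (compl_adj_middle h3 a) a.2.1,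
    pivotGraph_addApex_compl_adj_of_adj h32 (compl_adj_middle h3 b) b.2.1,
    pivotGraph_addApex_compl_adj_of_adj h34 (compl_adj_middle h3 a) a.2.2.2,
    pivotGraph_addApex_compl_adj_of_adj h34 (compl_adj_middle h3 b) b.2.2.2,
    adj_iff_of_neighborSet_eq_pair h2, adj_iff_of_neighborSet_eq_pair h2,
    adj_iff_of_neighborSet_eq_pair h4, adj_iff_of_neighborSet_eq_pair h4, Sym2.eq_iff]
  grind [a.2.2.1, b.2.2.1]

lemma pivot_pivot_middle_adj_none (h3 : H.neighborSet x3 = {x2, x4})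
    (a : {v : V // v ≠ x2 ∧ v ≠ x3 ∧ v ≠ x4}) :
    (pivotGraph (pivotGraph (addApex Hᶜ) none (some x3)) (some x2) (some x4)).Adj none
      (some a) := by
  have h32 : H.Adj x3 x2 := (adj_iff_of_neighborSet_eq_pair h3).2 (.inl rfl)
  have h34 : H.Adj x3 x4 := (adj_iff_of_neighborSet_eq_pair h3).2 (.inr rfl)
  rw [pivotGraph_adj_of_not_adj
    (fun h => not_pivotGraph_addApex_compl_adj_none_some h32 h.symm)
    (fun h => not_pivotGraph_addApex_compl_adj_none_some h34 h.symm)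
    (by simp) (by simp) (by simpa using a.2.1) (by simpa using a.2.2.2)]
  exact pivot_middle_adj_none h3 a

lemma pivot_pivot_middle_adj_some (hx15 : x1 ≠ x5) (h2 : H.neighborSet x2 = {x1, x3})
    (h3 : H.neighborSet x3 = {x2, x4}) (h4 : H.neighborSet x4 = {x3, x5})
    (a b : {v : V // v ≠ x2 ∧ v ≠ x3 ∧ v ≠ x4}) :
    (pivotGraph (pivotGraph (addApex Hᶜ) none (some x3)) (some x2) (some x4)).Adj (some a)
      (some b) ↔ Xor (Hᶜ.Adj a b) (s(a.1, b.1) = s(x1, x5)) := by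
  rw [pivotGraph_adj_of_ne (by simpa using a.2.1) (by simpa using a.2.2.2)
    (by simpa using b.2.1) (by simpa using b.2.2.2), pivot_middle_adj_some h3,
    pivotCross_pivot_middle hx15 h2 h3 h4]

end InducedPath

theorem pivot_computation_general {V : Type} (H : SimpleGraph V)
    (x1 x2 x3 x4 x5 : V) (hd : [x1, x2, x3, x4, x5].Nodup)
    (h2 : H.neighborSet x2 = {x1, x3}) (h3 : H.neighborSet x3 = {x2, x4})
    (h4 : H.neighborSet x4 = {x3, x5}) (h15 : ¬ H.Adj x1 x5) :
    Nonempty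
      (((pivotGraph (pivotGraph (addApex Hᶜ) none (some x3)) (some x2) (some x4)).induce
          {w : Option V | w ≠ some x2 ∧ w ≠ some x3 ∧ w ≠ some x4}) ≃g
        addApex ((SimpleGraph.fromRel
          (fun a b : {v : V // v ≠ x2 ∧ v ≠ x3 ∧ v ≠ x4} =>
            H.Adj a.1 b.1 ∨ (a.1 = x1 ∧ b.1 = x5)))ᶜ)) := by
  have hx15 : x1 ≠ x5 := by
    rintro rfl
    simp at hd
  refine nonempty_induce_iso_addApex _ (by simp) (fun v => by simp)
    (pivot_pivot_middle_adj_none h3) fun a b => ?_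
  rw [pivot_pivot_middle_adj_some hx15 h2 h3 h4, compl_adj, compl_adj, fromRel_adj, Sym2.eq_iff]
  grind [H.adj_comm]

/-- the pivot computation
`((complement(H) + K_1) ∧ u x3 ∧ x2 x4) − {x2, x3, x4} = complement(H') + K_1`, where
`H' = (H − {x2,x3,x4}) ∪ {x1x5}`. -/
theorem pivot_computation {V : Type} [Fintype V] (r : ℕ) (H : SimpleGraph V)
    (hH : IsSubdivisionWith (⊤ : SimpleGraph (Fin r)) (fun n => 4 ≤ n ∧ n % 3 = 1) H)
    (x1 x2 x3 x4 x5 : V) (hd : [x1, x2, x3, x4, x5].Nodup)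
    (h2 : H.neighborSet x2 = {x1, x3}) (h3 : H.neighborSet x3 = {x2, x4})
    (h4 : H.neighborSet x4 = {x3, x5}) (h15 : ¬ H.Adj x1 x5) :
    Nonempty
      (((pivotGraph (pivotGraph (addApex Hᶜ) none (some x3)) (some x2) (some x4)).induce
          {w : Option V | w ≠ some x2 ∧ w ≠ some x3 ∧ w ≠ some x4}) ≃g
        addApex ((SimpleGraph.fromRel
          (fun a b : {v : V // v ≠ x2 ∧ v ≠ x3 ∧ v ≠ x4} =>
            H.Adj a.1 b.1 ∨ (a.1 = x1 ∧ b.1 = x5)))ᶜ)) :=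
  pivot_computation_general H x1 x2 x3 x4 x5 hd h2 h3 h4 h15
end
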